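/- Let n ≥ 1 and α_0 ∈ F, and consider L(n, α_0) with the form defined by the functional t(f,[p]) = coeff_{n-1}(f−p) − α_0·coeff_0(f−p) (for n ≥ 2; for n = 1, t(f,[p]) = coeff_0(f−p)). The subalgebra W_1 = span_F{ b_i(x^{-k},0), b_i(0,−1), b_i(0,−x^ℓ) : k ≥ 1, 1 ≤ ℓ ≤ n−1, 1 ≤ i ≤ d } is a Lie subalgebra of L(n,α_0) complementary to the diagonal Δ. -/

import Mathlib

noncomputable section ManinCore

open scoped BigOperators
open HahnSeries

variable {F : Type} [Field F] {g : Type} [LieRing g] [LieAlgebra F g] {d n : ℕ}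

/-- A Lie ring viewed as a non-unital non-associative semiring with `*` given by the bracket. -/
def lieMulStruct (g : Type) [LieRing g] : NonUnitalNonAssocSemiring g :=
  { (inferInstance : AddCommMonoid g) with
    mul := fun a b => ⁅a, b⁆
    left_distrib := fun a b c => lie_add a b c
    right_distrib := fun a b c => add_lie a b c
    zero_mul := zero_lie
    mul_zero := lie_zero }

/-- Convolution Lie bracket on `g`-valued formal (Hahn/Laurent) series `g((x))`. -/
def bracketLau (u v : HahnSeries ℤ g) : HahnSeries ℤ g :=
  letI : Mul (HahnSeries ℤ g) := @HahnSeries.instMul ℤ g _ _ _ (lieMulStruct g)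
  u * v

/-- The truncated Lie bracket on `g[x]/x^n g[x]`, represented as `Fin n → g`. -/
def bracketTr (p q : Fin n → g) : Fin n → g :=
  fun m => ∑ i : Fin n, ∑ j : Fin n, if (i : ℕ) + (j : ℕ) = (m : ℕ) then ⁅p i, q j⁆ else 0

/-- The Lie algebra `L(n,α) = g((x)) × g[x]/x^n g[x]` (as an `F`-module). -/
abbrev LL (g : Type) [AddCommGroup g] (n : ℕ) := HahnSeries ℤ g × (Fin n → g)

/-- Componentwise bracket on `L(n,α)`. -/
def bracketLL (z w : LL g n) : LL g n := (bracketLau z.1 w.1, bracketTr z.2 w.2)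

variable (F g n) in
/-- The diagonal `Δ = {(f,[f]) | f ∈ g[[x]]} ⊆ L(n,α)`. -/
def Delta [Module F g] : Submodule F (LL g n) where
  carrier := {z | (∀ k : ℤ, k < 0 → z.1.coeff k = 0) ∧ ∀ m : Fin n, z.2 m = z.1.coeff (m : ℤ)}
  add_mem' := by
    rintro a b ⟨ha1, ha2⟩ ⟨hb1, hb2⟩
    refine ⟨fun k hk => ?_, fun m => ?_⟩
    · simp [HahnSeries.coeff_add, ha1 k hk, hb1 k hk]
    · simp [HahnSeries.coeff_add, ha2 m, hb2 m]
  zero_mem' := by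
    exact ⟨fun k _ => rfl, fun m => rfl⟩
  smul_mem' := by
    rintro c a ⟨ha1, ha2⟩
    refine ⟨fun k hk => ?_, fun m => ?_⟩
    · simp [HahnSeries.coeff_smul, ha1 k hk]
    · simp [HahnSeries.coeff_smul, ha2 m]

/-- Residue-type bilinear pairing on the Laurent part: `res₀(α·κ(u,v))`. -/
def BLau (κ : g →ₗ[F] g →ₗ[F] F) (α : LaurentSeries F) (u v : HahnSeries ℤ g) : F :=
  ∑ᶠ (i : ℤ) (j : ℤ), α.coeff i * κ (u.coeff j) (v.coeff (-1 - i - j))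

/-- Pairing on the truncated part: `res₀(α·κ(p,q))`. -/
def BTr (κ : g →ₗ[F] g →ₗ[F] F) (α : LaurentSeries F) (p q : Fin n → g) : F :=
  ∑ i : Fin n, ∑ j : Fin n, α.coeff (-1 - (i : ℕ) - (j : ℕ)) * κ (p i) (q j)

/-- The bilinear form `B` on `L(n,α)`: `B((f,p),(g,q)) = res₀(α(fg − pq))` (κ-valued). -/
def BB (κ : g →ₗ[F] g →ₗ[F] F) (α : LaurentSeries F) (z w : LL g n) : F :=
  BLau κ α z.1 w.1 - BTr κ α z.2 w.2

variable (g n) in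
/-- The elements `w_{k,i}` from the expansion of `y^nΩ/(x-y)` in `(L(n,α) ⊗ g)[[y]]`. -/
def wElt (b : Fin d → g) (k : ℕ) (i : Fin d) : LL g n :=
  if k < n then (0, fun m => if (m : ℕ) = n - 1 - k then -(b i) else 0)
  else (HahnSeries.single ((n : ℤ) - 1 - k) (b i), 0)

/-- Multiplication of a `g`-valued Laurent series by a scalar power series. -/
def psSmulLau (s : PowerSeries F) (u : HahnSeries ℤ g) : HahnSeries ℤ g :=
  (HahnModule.of F).symm ((HahnSeries.ofPowerSeries ℤ F s) • (HahnModule.of F u))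

/-- Multiplication of a truncated polynomial by a power series. -/
def psSmulTr (s : PowerSeries F) (p : Fin n → g) : Fin n → g :=
  fun m => ∑ j : Fin n, if (j : ℕ) ≤ (m : ℕ) then (PowerSeries.coeff ((m : ℕ) - j)) s • p j else 0

/-- Componentwise multiplication of an element of `L(n,α)` by a power series. -/
def psSmulLL (s : PowerSeries F) (z : LL g n) : LL g n := (psSmulLau s z.1, psSmulTr s z.2)

/-- The diagonal monomial `b_i(y^k, [y^k]) ∈ Δ ⊆ L(n,α)`. -/
def diagMono (b : Fin d → g) (k : ℕ) (i : Fin d) : LL g n :=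
  (HahnSeries.single (k : ℤ) (b i), fun m => if (m : ℕ) = k then b i else 0)

/-- The `g`-valued Hahn series with coefficients `γ : ℕ → g` in nonnegative degrees. -/
def ofNatCoeff (γ : ℕ → g) : HahnSeries ℤ g :=
  HahnSeries.embDomain Nat.castOrderEmbedding
    ⟨γ, Set.IsWF.isPWO ((wellFounded_lt).wellFoundedOn :
      (Function.support γ).WellFoundedOn (· < ·))⟩

/-- The diagonal element of `L(n,α)` corresponding to a formal power series with
basis coefficients `γ : ℕ → Fin d → F` (i.e. `∑ γ ℓ j • b_j x^ℓ`). -/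
def diagOf [Module F g] (b : Fin d → g) (γ : ℕ → Fin d → F) : LL g n :=
  (ofNatCoeff (fun ℓ => ∑ j, γ ℓ j • b j), fun m => ∑ j, γ (m : ℕ) j • b j)

/-!
Identify `W₁` with the pairs `(f, [p])` whose Laurent component `f` has support in the negative
degrees. Such `f` have finite support, so they are spanned by the `b_i x⁻ᵏ`; the Laurent bracket
adds degrees, so `W₁` is closed under it. Writing `f = f₋ + f₊` with `f₋ = truncLT 0 f`, every
element splits as `(f₊, [f₊]) + (f₋, [p] - [f₊])` with the first summand in `Δ`, and `Δ ∩ W₁ = 0`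
since an element of both has `f` without negative and without nonnegative terms.
-/

namespace HahnSeries

variable {Γ R : Type*}

theorem sum_single_coeff_of_support_finite [PartialOrder Γ] [AddCommMonoid R] (x : R⟦Γ⟧)
    (hx : x.support.Finite) : ∑ m ∈ hx.toFinset, single m (x.coeff m) = x := by
  classical
  ext k
  rw [coeff_sum]
  simp only [coeff_single, Finset.sum_ite_eq, Set.Finite.mem_toFinset, mem_support]
  split_ifs with hk
  · rfl
  · exact (not_not.1 hk).symm

theorem support_finite_of_support_subset_Iio_zero [Zero R] {x : HahnSeries ℤ R}
    (hx : x.support ⊆ Set.Iio 0) : x.support.Finite :=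
  (Set.finite_Ico x.order 0).subset fun _ hk => ⟨order_le_of_coeff_ne_zero hk, hx hk⟩

theorem support_mul_subset_Iio_zero [AddCommMonoid Γ] [PartialOrder Γ]
    [IsOrderedCancelAddMonoid Γ] [NonUnitalNonAssocSemiring R] {x y : R⟦Γ⟧}
    (hx : x.support ⊆ Set.Iio 0) (hy : y.support ⊆ Set.Iio 0) :
    (x * y).support ⊆ Set.Iio 0 := by
  refine support_mul_subset.trans ?_
  rintro _ ⟨i, hi, j, hj, rfl⟩
  exact add_neg (hx hi) (hy hj)

end HahnSeries

variable (F g n) in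
def negTailSubmodule : Submodule F (LL g n) where
  carrier := {z | z.1.support ⊆ Set.Iio 0}
  add_mem' {z w} hz hw := (HahnSeries.support_add_subset _ _).trans (Set.union_subset hz hw)
  zero_mem' := by simp
  smul_mem' c z hz := (HahnSeries.support_smul_subset c z.1).trans hz

lemma mem_negTailSubmodule {z : LL g n} :
    z ∈ negTailSubmodule F g n ↔ z.1.support ⊆ Set.Iio 0 := Iff.rfl

lemma bracketLL_mem_negTailSubmodule {u v : LL g n} (hu : u ∈ negTailSubmodule F g n)
    (hv : v ∈ negTailSubmodule F g n) : bracketLL u v ∈ negTailSubmodule F g n := by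
  let := lieMulStruct g
  exact HahnSeries.support_mul_subset_Iio_zero hu hv

def diagonalPart (z : LL g n) : LL g n :=
  (z.1 - truncLT 0 z.1, fun m => z.1.coeff m)

lemma diagonalPart_mem_Delta (z : LL g n) : diagonalPart z ∈ Delta F g n := by
  refine ⟨fun k hk => ?_, fun m => ?_⟩
  · simp [diagonalPart, coeff_truncLT_of_lt hk]
  · simp [diagonalPart, coeff_truncLT_of_le (Int.natCast_nonneg (m : ℕ))]

lemma sub_diagonalPart_mem_negTailSubmodule (z : LL g n) :
    z - diagonalPart z ∈ negTailSubmodule F g n := by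
  intro k hk
  rw [Set.mem_Iio]
  by_contra hneg
  simp [diagonalPart, coeff_truncLT_of_le (not_lt.1 hneg)] at hk

lemma isCompl_Delta_negTailSubmodule :
    IsCompl (Delta F g n) (negTailSubmodule F g n) := by
  constructor
  · rw [Submodule.disjoint_def]
    rintro z ⟨hneg, hdiag⟩ htail
    have hz1 : z.1 = 0 := by
      ext k
      by_contra hk
      exact hk (hneg k (htail hk))
    exact Prod.ext hz1 (funext fun m => by rw [hdiag m, hz1]; rfl)
  · rw [Submodule.codisjoint_iff_exists_add_eq]
    exact fun z => ⟨_, _, diagonalPart_mem_Delta z, sub_diagonalPart_mem_negTailSubmodule z,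
      add_sub_cancel _ _⟩

variable (n) in
def negTailGenerators (b : Module.Basis (Fin d) F g) : Set (LL g n) :=
  (Set.range fun p : ℕ × Fin d =>
      ((HahnSeries.single (-(p.1 : ℤ) - 1) (b p.2), 0) : LL g n)) ∪
    {z : LL g n | z.1 = 0}

lemma inl_single_mem_span_negTailGenerators (b : Module.Basis (Fin d) F g) {m : ℤ} (hm : m < 0)
    (c : g) : ((single m c, 0) : LL g n) ∈ Submodule.span F (negTailGenerators n b) := by
  have hbasis : Submodule.span F (Set.range b) ≤ (Submodule.span F (negTailGenerators n b)).comap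
      (LinearMap.inl F _ (Fin n → g) ∘ₗ single.linearMap m) := by
    rw [Submodule.span_le]
    rintro _ ⟨i, rfl⟩
    refine Submodule.subset_span (Or.inl ⟨((-m - 1).toNat, i), ?_⟩)
    show ((single _ (b i), 0) : LL g n) = (single m (b i), 0)
    rw [Int.toNat_of_nonneg (by omega)]
    congr
    ring
  exact hbasis (b.span_eq ▸ Submodule.mem_top)

lemma span_negTailGenerators (b : Module.Basis (Fin d) F g) :
    Submodule.span F (negTailGenerators n b) = negTailSubmodule F g n := by
  apply le_antisymm
  · rw [Submodule.span_le]
    rintro z (⟨p, rfl⟩ | hz)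
    · refine (support_single_subset).trans ?_
      simp only [Set.singleton_subset_iff, Set.mem_Iio]
      omega
    · simp [mem_negTailSubmodule, show z.1 = 0 from hz]
  · intro z hz
    have htail : ((z.1, 0) : LL g n) =
        ∑ m ∈ (support_finite_of_support_subset_Iio_zero hz).toFinset,
          LinearMap.inl F _ (Fin n → g) (single m (z.1.coeff m)) := by
      rw [← map_sum, sum_single_coeff_of_support_finite]
      rfl
    rw [← Prod.fst_add_snd z, htail]
    refine Submodule.add_mem _ (Submodule.sum_mem _ fun m hm => ?_)
      (Submodule.subset_span (Or.inr rfl))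
    exact inl_single_mem_span_negTailGenerators b (hz ((Set.Finite.mem_toFinset _).1 hm)) _

theorem stmt17_general (n : ℕ) (b : Module.Basis (Fin d) F g) :
    (∀ u ∈ Submodule.span F
        ((Set.range fun p : ℕ × Fin d =>
            ((HahnSeries.single (-(p.1 : ℤ) - 1) (b p.2), 0) : LL g n)) ∪
          {z : LL g n | z.1 = 0}),
      ∀ v ∈ Submodule.span F
        ((Set.range fun p : ℕ × Fin d =>
            ((HahnSeries.single (-(p.1 : ℤ) - 1) (b p.2), 0) : LL g n)) ∪
          {z : LL g n | z.1 = 0}),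
        bracketLL u v ∈ Submodule.span F
          ((Set.range fun p : ℕ × Fin d =>
              ((HahnSeries.single (-(p.1 : ℤ) - 1) (b p.2), 0) : LL g n)) ∪
            {z : LL g n | z.1 = 0})) ∧
    IsCompl (Delta F g n)
      (Submodule.span F
        ((Set.range fun p : ℕ × Fin d =>
            ((HahnSeries.single (-(p.1 : ℤ) - 1) (b p.2), 0) : LL g n)) ∪
          {z : LL g n | z.1 = 0})) := by
  rw [← negTailGenerators, span_negTailGenerators b]
  exact ⟨fun u hu v hv => bracketLL_mem_negTailSubmodule hu hv, isCompl_Delta_negTailSubmodule⟩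

/-- For `n ≥ 1`, the subspace
`W₁ = span{b_i(x⁻ᵏ,0), b_i(0,−1), b_i(0,−xˡ) : k ≥ 1, 1 ≤ l ≤ n−1}` — i.e. the span of
the strictly negative Laurent tails together with the whole truncated component
`{0} × g[x]/xⁿg[x]` — is a Lie subalgebra of `L(n,α₀)` complementary to the diagonal. -/
theorem stmt17 (n : ℕ) (hn : 1 ≤ n) (b : Module.Basis (Fin d) F g) (α₀ : F) :
    (∀ u ∈ Submodule.span F
        ((Set.range fun p : ℕ × Fin d =>
            ((HahnSeries.single (-(p.1 : ℤ) - 1) (b p.2), 0) : LL g n)) ∪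
          {z : LL g n | z.1 = 0}),
      ∀ v ∈ Submodule.span F
        ((Set.range fun p : ℕ × Fin d =>
            ((HahnSeries.single (-(p.1 : ℤ) - 1) (b p.2), 0) : LL g n)) ∪
          {z : LL g n | z.1 = 0}),
        bracketLL u v ∈ Submodule.span F
          ((Set.range fun p : ℕ × Fin d =>
              ((HahnSeries.single (-(p.1 : ℤ) - 1) (b p.2), 0) : LL g n)) ∪
            {z : LL g n | z.1 = 0})) ∧
    IsCompl (Delta F g n)
      (Submodule.span F
        ((Set.range fun p : ℕ × Fin d =>
            ((HahnSeries.single (-(p.1 : ℤ) - 1) (b p.2), 0) : LL g n)) ∪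
          {z : LL g n | z.1 = 0})) :=
  stmt17_general n b

end ManinCore
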